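/- arXiv:1905.12414 — 3 statements merged into one kernel-verified Lean document; each statement's English description precedes it below -/
import Mathlib

section
/- For all integers k ≥ 2 and n ≥ 6, the Gallai-Ramsey number of the wheel W_n satisfies: gr_k(K_3 : W_n) ≥ (3n − 4)·5^{(k−2)/2} + 1 if n is even and k is even; gr_k(K_3 : W_n) ≥ (6n − 8)·5^{(k−3)/2} + 1 if n is even and k is odd; gr_k(K_3 : W_n) ≥ (2n − 3)·5^{(k−2)/2} + 1 if n is odd and k is even; and gr_k(K_3 : W_n) ≥ (4n − 6)·5^{(k−3)/2} + 1 if n is odd and k is odd. -/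
/-!
The lower bounds come from explicit colourings by substitution: replacing every vertex of a
coloured `K_B` by a copy of a coloured `K_N` creates no rainbow triangle, and a monochromatic
wheel can appear neither in an old colour (the wheel is connected, so it would lie inside one
copy) nor in a new colour (it would map homomorphically into a colour class of `K_B`).
Start from `K_{n-1}` in one colour, too small to hold `W_n`; substitute it into a one-coloured
`K_3` when `n - 1` is odd (odd wheels are not 3-colourable) and into `K_2` otherwise (wheels
contain triangles); substitute into `K_2` once more when `k` is odd; then substitute repeatedly
into the 2-colouring of `K_5` by two pentagons, whose colour classes are triangle-free, each
time gaining two colours and a factor 5 in size.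
-/

open SimpleGraph

/-- The cone over a graph: join of `K₁` with `G`. The new vertex `none` is
adjacent to every vertex of `G`. -/
def coneGraph {V : Type*} (G : SimpleGraph V) : SimpleGraph (Option V) where
  Adj u v :=
    (u = none ∧ v ≠ none) ∨ (u ≠ none ∧ v = none) ∨
      (∃ a b, u = some a ∧ v = some b ∧ G.Adj a b)
  symm := by
    constructor
    rintro u v (⟨h1, h2⟩ | ⟨h1, h2⟩ | ⟨a, b, h1, h2, h3⟩)
    · exact Or.inr (Or.inl ⟨h2, h1⟩)
    · exact Or.inl ⟨h2, h1⟩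
    · exact Or.inr (Or.inr ⟨b, a, h2, h1, h3.symm⟩)
  loopless := by
    constructor
    rintro u (⟨h1, h2⟩ | ⟨h1, h2⟩ | ⟨a, b, h1, h2, h3⟩)
    · exact h2 h1
    · exact h1 h2
    · subst h1
      rw [Option.some_inj] at h2
      subst h2
      exact G.loopless.irrefl a h3

/-- The wheel graph `W_{m+1}`: a hub joined to every vertex of the cycle `C_m`. -/
def wheelGraph (m : ℕ) : SimpleGraph (Option (Fin m)) :=
  coneGraph (cycleGraph m)

/-- The fan graph `F_m = K₁ ∨ P_m`. -/
def fanGraph (m : ℕ) : SimpleGraph (Option (Fin m)) :=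
  coneGraph (pathGraph m)

/-- An edge-coloring `c` of the complete graph on `W` contains a monochromatic
copy of `H` in color `i`. -/
def HasMonoCopy {V W α : Type*} (c : Sym2 W → α) (H : SimpleGraph V) (i : α) : Prop :=
  ∃ f : V ↪ W, ∀ u v : V, H.Adj u v → c s(f u, f v) = i

/-- An edge-coloring `c` of the complete graph on `W` contains a rainbow triangle. -/
def HasRainbowTriangle {W α : Type*} (c : Sym2 W → α) : Prop :=
  ∃ x y z : W, x ≠ y ∧ y ≠ z ∧ x ≠ z ∧
    c s(x, y) ≠ c s(y, z) ∧ c s(y, z) ≠ c s(x, z) ∧ c s(x, y) ≠ c s(x, z)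

/-- An edge-coloring `c` of the complete graph on `W` contains a rainbow copy of `G`,
i.e. a copy of `G` all of whose edges receive pairwise distinct colors. -/
def HasRainbowCopy {V W α : Type*} (c : Sym2 W → α) (G : SimpleGraph V) : Prop :=
  ∃ f : V ↪ W, ∀ u v x y : V, G.Adj u v → G.Adj x y →
    c s(f u, f v) = c s(f x, f y) → s(u, v) = s(x, y)

/-- The two-color Ramsey number `R(G, H)`. -/
noncomputable def ramseyNumber {V₁ V₂ : Type*} (G : SimpleGraph V₁) (H : SimpleGraph V₂) : ℕ :=
  sInf {n : ℕ | ∀ c : Sym2 (Fin n) → Fin 2, HasMonoCopy c G 0 ∨ HasMonoCopy c H 1}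

/-- The `k`-color Ramsey number `R_k(H)`. -/
noncomputable def multicolorRamseyNumber {V : Type*} (k : ℕ) (H : SimpleGraph V) : ℕ :=
  sInf {n : ℕ | ∀ c : Sym2 (Fin n) → Fin k, ∃ i, HasMonoCopy c H i}

/-- The Gallai-Ramsey number `gr_k(K₃ : H)`. -/
noncomputable def gallaiRamseyK3 {V : Type*} (k : ℕ) (H : SimpleGraph V) : ℕ :=
  sInf {n : ℕ | ∀ c : Sym2 (Fin n) → Fin k,
    HasRainbowTriangle c ∨ ∃ i, HasMonoCopy c H i}

/-- The general Gallai-Ramsey number `gr_k(G : H)`. -/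
noncomputable def gallaiRamsey {V₁ V₂ : Type*} (k : ℕ) (G : SimpleGraph V₁)
    (H : SimpleGraph V₂) : ℕ :=
  sInf {n : ℕ | ∀ c : Sym2 (Fin n) → Fin k,
    HasRainbowCopy c G ∨ ∃ i, HasMonoCopy c H i}

open Finset

variable {V W B α β : Type*}

def colorClass (c : Sym2 W → α) (i : α) : SimpleGraph W where
  Adj x y := x ≠ y ∧ c s(x, y) = i
  symm := ⟨fun _ _ h => ⟨h.1.symm, by rw [Sym2.eq_swap]; exact h.2⟩⟩
  loopless := ⟨fun _ h => h.1 rfl⟩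

def IsGallaiColoringAvoiding (c : Sym2 W → α) (H : SimpleGraph V) : Prop :=
  ¬HasRainbowTriangle c ∧ ∀ i, ¬HasMonoCopy c H i

def GallaiAvoidable (k N : ℕ) (H : SimpleGraph V) : Prop :=
  ∃ c : Sym2 (Fin N) → Fin k, IsGallaiColoringAvoiding c H

theorem not_hasRainbowTriangle_of_card_le_two [Fintype α] (hα : Fintype.card α ≤ 2)
    (c : Sym2 W → α) : ¬HasRainbowTriangle c := by
  rintro ⟨x, y, z, -, -, -, hxy, hyz, hxz⟩
  obtain ⟨i, j, hij, h⟩ :=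
    Fintype.exists_ne_map_eq_of_card_lt ![c s(x, y), c s(y, z), c s(x, z)] (by simp; omega)
  fin_cases i <;> fin_cases j <;> simp_all

theorem IsGallaiColoringAvoiding.comp {W' : Type*} {c : Sym2 W → α} {H : SimpleGraph V}
    (hc : IsGallaiColoringAvoiding c H) (e : W' ↪ W) (σ : α ≃ β) :
    IsGallaiColoringAvoiding (σ ∘ c ∘ Sym2.map e) H := by
  refine ⟨?_, fun i ⟨f, hf⟩ => hc.2 (σ.symm i) ⟨f.trans e, fun u v huv => ?_⟩⟩
  · rintro ⟨x, y, z, hxy, hyz, hxz, h₁, h₂, h₃⟩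
    simp only [Function.comp_apply, Sym2.map_mk, σ.injective.ne_iff] at h₁ h₂ h₃
    exact hc.1 ⟨e x, e y, e z, e.injective.ne hxy, e.injective.ne hyz, e.injective.ne hxz,
      h₁, h₂, h₃⟩
  · rw [Equiv.eq_symm_apply]
    simpa using hf u v huv

theorem exists_subset_color_determined_by_min [LinearOrder W] [Fintype α] (c : Sym2 W → α)
    (m : ℕ) (S : Finset W) (hS : (Fintype.card α + 1) ^ m ≤ #S) :
    ∃ T ⊆ S, m ≤ #T ∧ ∃ d : W → α, ∀ x ∈ T, ∀ y ∈ T, x < y → c s(x, y) = d x := by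
  classical
  induction m generalizing S with
  | zero => exact ⟨∅, empty_subset _, le_rfl, fun x => c s(x, x), by simp⟩
  | succ m ih =>
    have hSne : S.Nonempty := card_pos.1 (lt_of_lt_of_le (Nat.pow_pos (Nat.succ_pos _)) hS)
    set a := S.min' hSne
    have : Nonempty α := ⟨c s(a, a)⟩
    have hcard : #(univ : Finset α) * (Fintype.card α + 1) ^ m ≤ #(S.erase a) := by
      rw [card_erase_of_mem (S.min'_mem hSne), card_univ]
      rw [pow_succ, Nat.mul_add_one, Nat.mul_comm] at hS
      have := Nat.one_le_pow m (Fintype.card α + 1) (by omega)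
      omega
    obtain ⟨t, -, ht⟩ := exists_le_card_fiber_of_mul_le_card_of_maps_to
      (f := fun y => c s(a, y)) (fun _ _ => mem_univ _) univ_nonempty hcard
    obtain ⟨T, hTS, hT, d, hd⟩ := ih _ ht
    have haT : a ∉ T := fun h => by simpa using (mem_filter.1 (hTS h)).1
    refine ⟨insert a T, insert_subset (S.min'_mem hSne) (hTS.trans
      ((filter_subset _ _).trans (erase_subset _ _))), by rw [card_insert_of_notMem haT]; omega,
      Function.update d a t, ?_⟩
    intro x hx y hy hxy
    have hTa : ∀ z ∈ T, a ≤ z := fun z hz =>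
      S.min'_le z (mem_of_mem_erase (mem_filter.1 (hTS hz)).1)
    rcases mem_insert.1 hx with rfl | hx
    · rcases mem_insert.1 hy with rfl | hy
      · exact absurd hxy (lt_irrefl _)
      · simpa using (mem_filter.1 (hTS hy)).2
    · rcases mem_insert.1 hy with rfl | hy
      · exact absurd (hTa x hx) (not_le.2 hxy)
      · rw [Function.update_of_ne (ne_of_mem_of_not_mem hx haT)]
        exact hd x hx y hy hxy

theorem exists_monochromatic_finset [Fintype W] [LinearOrder W] [Fintype α]
    (c : Sym2 W → α) (s : ℕ)
    (hW : (Fintype.card α + 1) ^ (Fintype.card α * s + 1) ≤ Fintype.card W) :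
    ∃ i, ∃ T : Finset W, s < #T ∧ ∀ x ∈ T, ∀ y ∈ T, x ≠ y → c s(x, y) = i := by
  classical
  obtain ⟨T, -, hT, d, hd⟩ := exists_subset_color_determined_by_min c _ univ (by simpa using hW)
  obtain ⟨i, -, hi⟩ := exists_lt_card_fiber_of_mul_lt_card_of_maps_to (s := T) (t := univ)
    (f := d) (n := s) (fun _ _ => mem_univ _) (by rw [card_univ]; omega)
  refine ⟨i, _, hi, fun x hx y hy hxy => ?_⟩
  rw [mem_filter] at hx hy
  rcases hxy.lt_or_gt with h | h
  · rw [hd x hx.1 y hy.1 h, hx.2]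
  · rw [Sym2.eq_swap, hd y hy.1 x hx.1 h, hy.2]

theorem exists_forall_hasMonoCopy [Fintype V] (k : ℕ) (H : SimpleGraph V) :
    ∃ N, ∀ c : Sym2 (Fin N) → Fin k, ∃ i, HasMonoCopy c H i := by
  refine ⟨(k + 1) ^ (k * Fintype.card V + 1), fun c => ?_⟩
  obtain ⟨i, T, hT, hmono⟩ := exists_monochromatic_finset c (Fintype.card V) (by simp)
  obtain ⟨e⟩ := Function.Embedding.nonempty_of_card_le (β := T) (by simpa using hT.le)
  exact ⟨i, e.trans (Function.Embedding.subtype _), fun u v huv =>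
    hmono _ (e u).2 _ (e v).2 fun h => huv.ne (e.injective (Subtype.ext h))⟩

theorem GallaiAvoidable.lt_gallaiRamseyK3 [Fintype V] {H : SimpleGraph V} {k N : ℕ}
    (h : GallaiAvoidable k N H) : N < gallaiRamseyK3 k H := by
  obtain ⟨c, hc⟩ := h
  -- Ramsey's theorem makes the set in `gallaiRamseyK3` nonempty, so its `sInf` belongs to it
  obtain ⟨M, hM⟩ := exists_forall_hasMonoCopy k H
  by_contra! hle
  have hc' := hc.comp (Fin.castLEEmb hle) (Equiv.refl _)
  rcases Nat.sInf_mem (s := {n | ∀ c : Sym2 (Fin n) → Fin k,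
      HasRainbowTriangle c ∨ ∃ i, HasMonoCopy c H i}) ⟨M, fun c => Or.inr (hM c)⟩
      (c ∘ Sym2.map (Fin.castLEEmb hle)) with hr | ⟨i, hi⟩
  exacts [hc'.1 hr, hc'.2 i hi]

theorem SimpleGraph.Preconnected.apply_eq_of_forall_adj {G : SimpleGraph V}
    (hG : G.Preconnected) {f : V → β} (hf : ∀ u v, G.Adj u v → f u = f v) (u v : V) :
    f u = f v := by
  obtain ⟨p⟩ := hG u v
  induction p with
  | nil => rfl
  | cons h _ ih => exact (hf _ _ h).trans ih

def blowupColoring [DecidableEq B] (g : Sym2 B → β) (c : Sym2 W → α) :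
    Sym2 (B × W) → α ⊕ β :=
  Sym2.lift ⟨fun p q => if p.1 = q.1 then .inl (c s(p.2, q.2)) else .inr (g s(p.1, q.1)),
    fun p q => by by_cases h : p.1 = q.1 <;> simp [h, eq_comm, Sym2.eq_swap]⟩

section blowup

variable [DecidableEq B] {g : Sym2 B → β} {c : Sym2 W → α}

@[simp]
theorem blowupColoring_mk (p q : B × W) :
    blowupColoring g c s(p, q) =
      if p.1 = q.1 then .inl (c s(p.2, q.2)) else .inr (g s(p.1, q.1)) :=
  rfl

theorem not_hasRainbowTriangle_blowupColoring (hg : ¬HasRainbowTriangle g)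
    (hc : ¬HasRainbowTriangle c) : ¬HasRainbowTriangle (blowupColoring g c) := by
  rintro ⟨x, y, z, hxy, hyz, hxz, h₁, h₂, h₃⟩
  simp only [blowupColoring_mk] at h₁ h₂ h₃
  by_cases hsame : x.1 = y.1 ∧ y.1 = z.1
  · obtain ⟨bxy, byz⟩ := hsame
    have bxz := bxy.trans byz
    simp only [bxy, byz, if_true, ne_eq, Sum.inl.injEq] at h₁ h₂ h₃
    exact hc ⟨x.2, y.2, z.2, fun h => hxy (Prod.ext bxy h), fun h => hyz (Prod.ext byz h),
      fun h => hxz (Prod.ext bxz h), h₁, h₂, h₃⟩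
  by_cases hdist : x.1 ≠ y.1 ∧ y.1 ≠ z.1 ∧ x.1 ≠ z.1
  · obtain ⟨bxy, byz, bxz⟩ := hdist
    simp only [bxy, byz, bxz, if_false, ne_eq, Sum.inr.injEq] at h₁ h₂ h₃
    exact hg ⟨x.1, y.1, z.1, bxy, byz, bxz, h₁, h₂, h₃⟩
  -- a triangle meeting exactly two blocks has its two edges between them of the same colour
  by_cases bxy : x.1 = y.1 <;> by_cases byz : y.1 = z.1 <;> simp_all [Sym2.eq_swap]

theorem not_hasMonoCopy_blowupColoring_inl {H : SimpleGraph V} (hH : H.Preconnected) {i : α}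
    (hc : ¬HasMonoCopy c H i) : ¬HasMonoCopy (blowupColoring g c) H (.inl i) := by
  rintro ⟨f, hf⟩
  have hblock : ∀ u v, (f u).1 = (f v).1 := hH.apply_eq_of_forall_adj fun u v huv => by
    have := hf u v huv
    simp only [blowupColoring_mk] at this
    split_ifs at this with h
    exact h
  refine hc ⟨⟨fun v => (f v).2, fun u v h => f.injective (Prod.ext (hblock u v) h)⟩,
    fun u v huv => ?_⟩
  show c s((f u).2, (f v).2) = i
  simpa [hblock u v] using hf u v huv

theorem not_hasMonoCopy_blowupColoring_inr {H : SimpleGraph V} {j : β}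
    (hg : IsEmpty (H →g colorClass g j)) : ¬HasMonoCopy (blowupColoring g c) H (.inr j) := by
  rintro ⟨f, hf⟩
  refine hg.false ⟨fun v => (f v).1, fun {u v} huv => ?_⟩
  have := hf u v huv
  simp only [blowupColoring_mk] at this
  split_ifs at this with h
  exact ⟨h, Sum.inr_injective this⟩

theorem IsGallaiColoringAvoiding.blowupColoring {H : SimpleGraph V} (hH : H.Preconnected)
    (hg : ¬HasRainbowTriangle g) (hgH : ∀ j, IsEmpty (H →g colorClass g j))
    (hc : IsGallaiColoringAvoiding c H) : IsGallaiColoringAvoiding (blowupColoring g c) H :=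
  ⟨not_hasRainbowTriangle_blowupColoring hg hc.1, fun
    | .inl i => not_hasMonoCopy_blowupColoring_inl hH (hc.2 i)
    | .inr j => not_hasMonoCopy_blowupColoring_inr (hgH j)⟩

end blowup

theorem isEmpty_hom_colorClass_of_not_colorable [Fintype B] {H : SimpleGraph V}
    (hH : ¬H.Colorable (Fintype.card B)) (g : Sym2 B → β) (j : β) :
    IsEmpty (H →g colorClass g j) :=
  ⟨fun φ => hH ((Coloring.mk id fun h => h.1 : (colorClass g j).Coloring B).colorable.of_hom φ)⟩

theorem isEmpty_hom_of_cliqueFree_three {H : SimpleGraph V} {G : SimpleGraph W}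
    (hG : G.CliqueFree 3) {a b c : V} (hab : H.Adj a b) (hac : H.Adj a c) (hbc : H.Adj b c) :
    IsEmpty (H →g G) := by
  classical
  exact ⟨fun φ => hG _ (is3Clique_triple_iff.2 ⟨φ.map_adj hab, φ.map_adj hac, φ.map_adj hbc⟩)⟩

def pentagonColoring : Sym2 (Fin 5) → Fin 2 :=
  Sym2.lift ⟨fun a b => if (cycleGraph 5).Adj a b then 0 else 1, fun a b => by
    simp only [adj_comm]⟩

theorem cliqueFree_three_colorClass_pentagonColoring (j : Fin 2) :
    (colorClass pentagonColoring j).CliqueFree 3 := by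
  intro t ht
  obtain ⟨a, b, c, hab, hac, hbc, -⟩ := is3Clique_iff.1 ht
  clear ht
  revert a b c j
  unfold colorClass
  decide

section GallaiAvoidable

variable {H : SimpleGraph V} {k N : ℕ}

theorem gallaiAvoidable_one_of_lt_card [Fintype V] (hN : N < Fintype.card V) :
    GallaiAvoidable 1 N H :=
  ⟨fun _ => 0, not_hasRainbowTriangle_of_card_le_two (by simp) _,
    fun _ ⟨f, _⟩ => ((Fintype.card_le_of_embedding f).trans_eq (Fintype.card_fin N)).not_gt hN⟩

theorem GallaiAvoidable.blowup {B r : ℕ} (hH : H.Preconnected) (g : Sym2 (Fin B) → Fin r)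
    (hg : ¬HasRainbowTriangle g) (hgH : ∀ j, IsEmpty (H →g colorClass g j))
    (h : GallaiAvoidable k N H) : GallaiAvoidable (k + r) (B * N) H := by
  obtain ⟨c, hc⟩ := h
  exact ⟨_, (hc.blowupColoring hH hg hgH).comp finProdFinEquiv.symm.toEmbedding finSumFinEquiv⟩

theorem GallaiAvoidable.blowup_complete {B : ℕ} (hH : H.Preconnected) (hB : ¬H.Colorable B)
    (h : GallaiAvoidable k N H) : GallaiAvoidable (k + 1) (B * N) H :=
  h.blowup hH (fun _ => 0) (not_hasRainbowTriangle_of_card_le_two (by simp) _)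
    (isEmpty_hom_colorClass_of_not_colorable (by simpa using hB) _)

theorem GallaiAvoidable.blowup_pentagon_iterate (hH : H.Preconnected) {a b c : V}
    (hab : H.Adj a b) (hac : H.Adj a c) (hbc : H.Adj b c) (h : GallaiAvoidable k N H) (j : ℕ) :
    GallaiAvoidable (k + 2 * j) (5 ^ j * N) H := by
  induction j with
  | zero => simpa using h
  | succ j ih =>
    rw [Nat.mul_succ, ← Nat.add_assoc, pow_succ', Nat.mul_assoc]
    exact ih.blowup hH pentagonColoring (not_hasRainbowTriangle_of_card_le_two (by simp) _)
      fun j => isEmpty_hom_of_cliqueFree_three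
        (cliqueFree_three_colorClass_pentagonColoring j) hab hac hbc

end GallaiAvoidable

theorem coneGraph_adj_none_some (G : SimpleGraph V) (a : V) : (coneGraph G).Adj none (some a) :=
  Or.inl ⟨rfl, Option.some_ne_none a⟩

theorem coneGraph_adj_some_some {G : SimpleGraph V} {a b : V} (h : G.Adj a b) :
    (coneGraph G).Adj (some a) (some b) :=
  Or.inr (Or.inr ⟨a, b, rfl, rfl, h⟩)

theorem coneGraph_preconnected (G : SimpleGraph V) : (coneGraph G).Preconnected := by
  have hub : ∀ u, (coneGraph G).Reachable none u
    | none => Reachable.refl _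
    | some a => (coneGraph_adj_none_some G a).reachable
  exact fun u v => (hub u).symm.trans (hub v)

theorem SimpleGraph.Colorable.of_coneGraph {G : SimpleGraph V} {k : ℕ}
    (h : (coneGraph G).Colorable (k + 1)) : G.Colorable k := by
  obtain ⟨C⟩ := h
  let C' : G.Coloring {x // x ≠ C none} :=
    Coloring.mk (fun a => ⟨C (some a), (C.valid (coneGraph_adj_none_some G a)).symm⟩)
      fun hab h => C.valid (coneGraph_adj_some_some hab) (congrArg Subtype.val h)
  simpa using C'.colorable

theorem cycleGraph_adj_zero_one (m : ℕ) : (cycleGraph (m + 2)).Adj 0 1 := by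
  simp [cycleGraph_adj]

theorem wheelGraph_not_colorable_two {m : ℕ} (hm : 2 ≤ m) : ¬(wheelGraph m).Colorable 2 := by
  obtain ⟨m, rfl⟩ := Nat.exists_eq_add_of_le' hm
  intro h
  have := colorable_one_iff.1 h.of_coneGraph
  exact (this ▸ cycleGraph_adj_zero_one m : (⊥ : SimpleGraph (Fin (m + 2))).Adj 0 1)

theorem wheelGraph_not_colorable_three {m : ℕ} (hm : 2 ≤ m) (hodd : Odd m) :
    ¬(wheelGraph m).Colorable 3 := fun h => by
  have := (Colorable.of_coneGraph h).chromaticNumber_le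
  rw [chromaticNumber_cycleGraph_of_odd m hm hodd] at this
  norm_num at this

theorem wheelGraph_preconnected (m : ℕ) : (wheelGraph m).Preconnected :=
  coneGraph_preconnected _

theorem gallaiAvoidable_wheelGraph_two_mul {m : ℕ} (hm : 2 ≤ m) :
    GallaiAvoidable 2 (2 * m) (wheelGraph m) :=
  (gallaiAvoidable_one_of_lt_card (by simp)).blowup_complete (wheelGraph_preconnected m)
    (wheelGraph_not_colorable_two hm)

theorem gallaiAvoidable_wheelGraph_three_mul {m : ℕ} (hm : 2 ≤ m) (hodd : Odd m) :
    GallaiAvoidable 2 (3 * m) (wheelGraph m) :=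
  (gallaiAvoidable_one_of_lt_card (by simp)).blowup_complete (wheelGraph_preconnected m)
    (wheelGraph_not_colorable_three hm hodd)

theorem GallaiAvoidable.le_gallaiRamseyK3_wheelGraph {k₀ k N m a : ℕ} (hm : 2 ≤ m)
    (h : GallaiAvoidable k₀ N (wheelGraph m)) (hk : k₀ ≤ k) (hpar : Even (k - k₀))
    (ha : a ≤ N) : a * 5 ^ ((k - k₀) / 2) + 1 ≤ gallaiRamseyK3 k (wheelGraph m) := by
  obtain ⟨m, rfl⟩ := Nat.exists_eq_add_of_le' hm
  obtain ⟨j, hj⟩ := hpar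
  obtain rfl : k = k₀ + 2 * j := by omega
  have hlt := (h.blowup_pentagon_iterate (wheelGraph_preconnected _)
    (coneGraph_adj_none_some _ 0) (coneGraph_adj_none_some _ 1)
    (coneGraph_adj_some_some (cycleGraph_adj_zero_one m)) j).lt_gallaiRamseyK3
  calc a * 5 ^ ((k₀ + 2 * j - k₀) / 2) + 1 ≤ 5 ^ j * N + 1 := by
        rw [show (k₀ + 2 * j - k₀) / 2 = j by omega, mul_comm]
        gcongr
    _ ≤ _ := hlt

/-- For all integers `k ≥ 2` and `n ≥ 6`, lower bounds on `gr_k(K₃ : W_n)`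
according to the parities of `n` and `k`. -/
theorem gallaiRamsey_wheel_lower (k n : ℕ) (hk : 2 ≤ k) (hn : 6 ≤ n) :
    (Even n → Even k →
      (3 * n - 4) * 5 ^ ((k - 2) / 2) + 1 ≤ gallaiRamseyK3 k (wheelGraph (n - 1))) ∧
    (Even n → Odd k →
      (6 * n - 8) * 5 ^ ((k - 3) / 2) + 1 ≤ gallaiRamseyK3 k (wheelGraph (n - 1))) ∧
    (Odd n → Even k →
      (2 * n - 3) * 5 ^ ((k - 2) / 2) + 1 ≤ gallaiRamseyK3 k (wheelGraph (n - 1))) ∧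
    (Odd n → Odd k →
      (4 * n - 6) * 5 ^ ((k - 3) / 2) + 1 ≤ gallaiRamseyK3 k (wheelGraph (n - 1))) := by
  have hm : 2 ≤ n - 1 := by omega
  have hodd : Even n → Odd (n - 1) := fun hn' => Nat.Even.sub_odd (by omega) hn' odd_one
  have hk₂ : Even k → Even (k - 2) := fun hk' => (Nat.even_sub hk).2 (iff_of_true hk' even_two)
  have hk₃ : Odd k → 3 ≤ k ∧ Even (k - 3) := fun hk' => by
    have h3 : 3 ≤ k := by obtain ⟨t, rfl⟩ := hk'; omega
    exact ⟨h3, (Nat.even_sub h3).2 (iff_of_false (Nat.not_even_iff_odd.2 hk') (by decide))⟩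
  have double {N : ℕ} (h : GallaiAvoidable 2 N (wheelGraph (n - 1))) :=
    h.blowup_complete (B := 2) (wheelGraph_preconnected _) (wheelGraph_not_colorable_two hm)
  refine ⟨fun hn' hk' => ?_, fun hn' hk' => ?_, fun _ hk' => ?_, fun _ hk' => ?_⟩
  · exact GallaiAvoidable.le_gallaiRamseyK3_wheelGraph hm
      (gallaiAvoidable_wheelGraph_three_mul hm (hodd hn')) hk (hk₂ hk') (by omega)
  · exact GallaiAvoidable.le_gallaiRamseyK3_wheelGraph hm
      (double (gallaiAvoidable_wheelGraph_three_mul hm (hodd hn'))) (hk₃ hk').1 (hk₃ hk').2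
      (by omega)
  · exact GallaiAvoidable.le_gallaiRamseyK3_wheelGraph hm
      (gallaiAvoidable_wheelGraph_two_mul hm) hk (hk₂ hk') (by omega)
  · exact GallaiAvoidable.le_gallaiRamseyK3_wheelGraph hm
      (double (gallaiAvoidable_wheelGraph_two_mul hm)) (hk₃ hk').1 (hk₃ hk').2 (by omega)
end

section
/- In any edge coloring of a finite complete graph on at least two vertices that contains no rainbow triangle, there exists a partition of the vertex set into at least two nonempty parts such that at most two colors in total appear on the edges joining distinct parts, and for each pair of distinct parts all edges between that pair of parts have the same single color. -/
open SimpleGraph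

/-!
Induction on the vertex set. For every color `a`, each component of the graph of `a`-colored edges
is a module: a vertex outside it sees it in a single color, since two different colors from it
along an `a`-edge of the component would form a rainbow triangle. If some color class is
disconnected, one of its components contracts to a single vertex, and a Gallai partition of the
smaller coloring pulls back. If at most two colors occur, the partition into singletons works.
Otherwise every color class is connected. Delete a vertex `v` and take a Gallai partition of the
rest, with cross colors `c₁, c₂`; a third color `X` can leave a part only through `v`, so `v`
has an `X`-edge into every part. Either some part meets all others in one color, and a color
other than `X` and that one produces a rainbow triangle at `v`, or `v` is joined to every vertex
in color `X`, and then no cross color can reach `v`.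
-/

section ColorGraph

variable {V α : Type*} {c : Sym2 V → α} {s : Finset V}

lemma color_eq_or_color_eq_of_ne (hc : ¬ HasRainbowTriangle c) {x y z : V} (hxy : x ≠ y)
    (hxz : x ≠ z) (hyz : y ≠ z) (h : c s(x, y) ≠ c s(x, z)) :
    c s(y, z) = c s(x, y) ∨ c s(y, z) = c s(x, z) := by
  by_contra! h'
  exact hc ⟨x, y, z, hxy, hyz, hxz, h'.1.symm, h'.2, h⟩

def colorGraph (c : Sym2 V → α) (s : Finset V) (a : α) : SimpleGraph V where
  Adj u v := u ∈ s ∧ v ∈ s ∧ u ≠ v ∧ c s(u, v) = a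
  symm := ⟨fun _ _ h => ⟨h.2.1, h.1, h.2.2.1.symm, Sym2.eq_swap ▸ h.2.2.2⟩⟩
  loopless := ⟨fun _ h => h.2.2.1 rfl⟩

variable {a : α} {u v : V}

lemma colorGraph_adj : (colorGraph c s a).Adj u v ↔ u ∈ s ∧ v ∈ s ∧ u ≠ v ∧ c s(u, v) = a :=
  Iff.rfl

lemma color_eq_of_reachable (hc : ¬ HasRainbowTriangle c) {x z : V} (hx : x ∈ s)
    (hux : ¬ (colorGraph c s a).Reachable u x) (huz : (colorGraph c s a).Reachable u z) :
    c s(x, z) = c s(x, u) := by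
  rw [SimpleGraph.reachable_iff_reflTransGen] at hux huz
  induction huz with
  | refl => rfl
  | @tail m k hum hmk ih =>
    obtain ⟨hm, hk, hmk', hcol⟩ := colorGraph_adj.mp hmk
    have hxm : x ≠ m := by rintro rfl; exact hux hum
    have hxk : x ≠ k := by rintro rfl; exact hux (hum.tail ⟨hm, hk, hmk', hcol⟩)
    have hxm_col : c s(x, m) ≠ a := fun h => hux (hum.tail ⟨hm, hx, hxm.symm, Sym2.eq_swap ▸ h⟩)
    have hxk_col : c s(x, k) ≠ a := fun h =>
      hux ((hum.tail ⟨hm, hk, hmk', hcol⟩).tail ⟨hk, hx, hxk.symm, Sym2.eq_swap ▸ h⟩)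
    rw [← ih]
    by_contra hne
    rcases color_eq_or_color_eq_of_ne hc hxk hxm hmk'.symm hne with h | h <;>
      rw [Sym2.eq_swap, hcol] at h
    exacts [hxk_col h.symm, hxm_col h.symm]

lemma exists_color_eq_of_reachable {T : Finset V} {w : V}
    (h : (colorGraph c s a).Reachable u w) (hu : u ∈ T) (hw : w ∉ T)
    (hout : ∀ m ∈ T, ∀ k ∈ s, k ∉ T → k ≠ v → c s(m, k) ≠ a) : ∃ m ∈ T, c s(m, v) = a := by
  obtain ⟨p⟩ := h
  obtain ⟨d, -, hd₁, hd₂⟩ := p.exists_boundary_dart T hu hw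
  obtain ⟨-, hk, -, hcol⟩ := colorGraph_adj.mp d.adj
  refine ⟨d.fst, hd₁, ?_⟩
  by_cases hkv : d.snd = v
  · rwa [← hkv]
  · exact absurd hcol (hout _ hd₁ _ hk hd₂ hkv)

end ColorGraph

namespace Finpartition

variable {V W : Type*} [DecidableEq V] [DecidableEq W] {s : Finset V} {t : Finset W} {f : V → W}

def comap (P : Finpartition t) (f : V → W) (hmaps : Set.MapsTo f s t)
    (hsurj : Set.SurjOn f s t) : Finpartition s :=
  ofExistsUnique (P.parts.image fun p => s.filter (f · ∈ p))
    (by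
      simp only [Finset.mem_image]
      rintro _ ⟨p, -, rfl⟩
      exact Finset.filter_subset _ _)
    (by
      intro x hx
      obtain ⟨p, hp, hxp⟩ := P.exists_mem (hmaps hx)
      refine ⟨s.filter (f · ∈ p), ⟨Finset.mem_image_of_mem _ hp, by simp [hx, hxp]⟩, ?_⟩
      rintro _ ⟨hq', hxq⟩
      obtain ⟨q, hq, rfl⟩ := Finset.mem_image.mp hq'
      rw [P.eq_of_mem_parts hq hp (Finset.mem_filter.mp hxq).2 hxp])
    (by
      simp only [Finset.mem_image, not_exists, not_and]
      intro p hp hempty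
      obtain ⟨y, hy⟩ := P.nonempty_of_mem_parts hp
      obtain ⟨x, hx, rfl⟩ := hsurj (P.subset hp hy)
      exact Finset.notMem_empty x (hempty ▸ Finset.mem_filter.mpr ⟨hx, hy⟩))

variable {P : Finpartition t} {hmaps : Set.MapsTo f s t} {hsurj : Set.SurjOn f s t}

lemma mem_parts_comap {q : Finset V} :
    q ∈ (P.comap f hmaps hsurj).parts ↔ ∃ p ∈ P.parts, s.filter (f · ∈ p) = q := by
  simp [comap]

lemma card_parts_comap : (P.comap f hmaps hsurj).parts.card = P.parts.card := by
  refine Finset.card_image_of_injOn fun p hp p' hp' hpp' => ?_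
  obtain ⟨y, hy⟩ := P.nonempty_of_mem_parts hp
  obtain ⟨x, hx, rfl⟩ := hsurj (P.subset hp hy)
  have hx' : x ∈ s.filter (f · ∈ p') := hpp' ▸ Finset.mem_filter.mpr ⟨hx, hy⟩
  exact P.eq_of_mem_parts hp hp' hy (Finset.mem_filter.mp hx').2

end Finpartition

section Gallai

variable {V α : Type*} [DecidableEq V] {c : Sym2 V → α} {s : Finset V}

structure IsGallaiPartition (c : Sym2 V → α) (P : Finpartition s) : Prop where
  two_le_card_parts : 2 ≤ P.parts.card
  exists_two_colors : ∃ c₁ c₂ : α, ∀ p ∈ P.parts, ∀ q ∈ P.parts, p ≠ q →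
    ∀ u ∈ p, ∀ v ∈ q, c s(u, v) = c₁ ∨ c s(u, v) = c₂
  monochromatic : ∀ p ∈ P.parts, ∀ q ∈ P.parts, p ≠ q →
    ∃ a : α, ∀ u ∈ p, ∀ v ∈ q, c s(u, v) = a

lemma isGallaiPartition_bot (hs : 2 ≤ s.card) {c₁ c₂ : α}
    (h : ∀ u ∈ s, ∀ v ∈ s, u ≠ v → c s(u, v) = c₁ ∨ c s(u, v) = c₂) :
    IsGallaiPartition c (⊥ : Finpartition s) := by
  refine ⟨by rwa [Finpartition.card_bot], ⟨c₁, c₂, ?_⟩, ?_⟩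
  · simp only [Finpartition.mem_bot_iff]
    rintro _ ⟨a, ha, rfl⟩ _ ⟨b, hb, rfl⟩ hab u hu v hv
    rw [Finset.mem_singleton] at hu hv
    subst hu hv
    exact h u ha v hb fun h => hab (by rw [h])
  · simp only [Finpartition.mem_bot_iff]
    rintro _ ⟨a, -, rfl⟩ _ ⟨b, -, rfl⟩ -
    exact ⟨c s(a, b), by simp⟩

lemma IsGallaiPartition.comap {W : Type*} [DecidableEq W] {c' : Sym2 W → α} {t : Finset W}
    {f : V → W} (hmaps : Set.MapsTo f s t) (hsurj : Set.SurjOn f s t)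
    (hcol : ∀ x ∈ s, ∀ z ∈ s, f x ≠ f z → c s(x, z) = c' s(f x, f z))
    {P : Finpartition t} (hP : IsGallaiPartition c' P) :
    IsGallaiPartition c (P.comap f hmaps hsurj) := by
  have hparts : ∀ p ∈ P.parts, ∀ q ∈ P.parts, s.filter (f · ∈ p) ≠ s.filter (f · ∈ q) →
      ∀ u ∈ s.filter (f · ∈ p), ∀ v ∈ s.filter (f · ∈ q), p ≠ q ∧ c s(u, v) = c' s(f u, f v) := by
    intro p hp q hq hpq u hu v hv
    rw [Finset.mem_filter] at hu hv
    have hne : p ≠ q := fun h => hpq (by rw [h])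
    refine ⟨hne, hcol u hu.1 v hv.1 fun h => hne ?_⟩
    exact P.eq_of_mem_parts hp hq hu.2 (h ▸ hv.2)
  obtain ⟨c₁, c₂, hP₂⟩ := hP.exists_two_colors
  refine ⟨by rw [Finpartition.card_parts_comap]; exact hP.two_le_card_parts, ⟨c₁, c₂, ?_⟩, ?_⟩
  · simp only [Finpartition.mem_parts_comap]
    rintro _ ⟨p, hp, rfl⟩ _ ⟨q, hq, rfl⟩ hpq u hu v hv
    obtain ⟨hne, heq⟩ := hparts p hp q hq hpq u hu v hv
    rw [heq]
    exact hP₂ p hp q hq hne _ (Finset.mem_filter.mp hu).2 _ (Finset.mem_filter.mp hv).2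
  · simp only [Finpartition.mem_parts_comap]
    rintro _ ⟨p, hp, rfl⟩ _ ⟨q, hq, rfl⟩ hpq
    obtain ⟨a, ha⟩ := hP.monochromatic p hp q hq fun h => hpq (by rw [h])
    refine ⟨a, fun u hu v hv => ?_⟩
    rw [(hparts p hp q hq hpq u hu v hv).2]
    exact ha _ (Finset.mem_filter.mp hu).2 _ (Finset.mem_filter.mp hv).2

lemma exists_isGallaiPartition_of_contract {M : Finset V} {m : V} (hMs : M ⊆ s) (hm : m ∈ M)
    (hmod : ∀ x ∈ s, x ∉ M → ∀ y ∈ M, c s(x, y) = c s(x, m))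
    {P : Finpartition (insert m (s \ M))} (hP : IsGallaiPartition c P) :
    ∃ Q : Finpartition s, IsGallaiPartition c Q := by
  let f : V → V := fun x => if x ∈ M then m else x
  have hmaps : Set.MapsTo f s ↑(insert m (s \ M)) := by
    intro x hx
    by_cases hxM : x ∈ M <;> simp [f, hxM, hx]
  have hsurj : Set.SurjOn f s ↑(insert m (s \ M)) := by
    intro y hy
    rcases Finset.mem_insert.mp hy with rfl | hy
    · exact ⟨y, hMs hm, by simp [f]⟩
    · obtain ⟨hys, hyM⟩ := Finset.mem_sdiff.mp hy
      exact ⟨y, hys, by simp [f, hyM]⟩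
  refine ⟨_, hP.comap hmaps hsurj fun x hx z hz hfxz => ?_⟩
  by_cases hxM : x ∈ M <;> by_cases hzM : z ∈ M <;>
    simp only [f, hxM, hzM, if_true, if_false] at hfxz ⊢
  · exact absurd rfl hfxz
  · rw [Sym2.eq_swap, hmod z hz hzM x hxM, Sym2.eq_swap]
  · exact hmod x hx hxM z hzM

variable {v : V} {P : Finpartition (s.erase v)} {a : α}

lemma exists_mem_color_eq_of_mem_parts (hP : 2 ≤ P.parts.card)
    (hconn : ∀ x ∈ s, ∀ z ∈ s, (colorGraph c s a).Reachable x z) {p : Finset V} (hp : p ∈ P.parts)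
    (hcross : ∀ q ∈ P.parts, q ≠ p → ∀ u ∈ p, ∀ w ∈ q, c s(u, w) ≠ a) :
    ∃ w ∈ p, c s(w, v) = a := by
  obtain ⟨q, hq, hqp⟩ := Finset.exists_mem_ne hP p
  obtain ⟨u, hu⟩ := P.nonempty_of_mem_parts hp
  obtain ⟨w, hw⟩ := P.nonempty_of_mem_parts hq
  have hwp : w ∉ p := fun hwp => hqp (P.eq_of_mem_parts hq hp hw hwp)
  refine exists_color_eq_of_reachable (hconn u (Finset.mem_of_mem_erase (P.subset hp hu))
    w (Finset.mem_of_mem_erase (P.subset hq hw))) hu hwp fun m hm k hk hkp hkv => ?_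
  obtain ⟨q', hq', hkq'⟩ := P.exists_mem (Finset.mem_erase.mpr ⟨hkv, hk⟩)
  exact hcross q' hq' (by rintro rfl; exact hkp hkq') m hm k hkq'

lemma color_eq_of_forall_exists_color_ne (hc : ¬ HasRainbowTriangle c) (hP : IsGallaiPartition c P)
    (hcross : ∀ p ∈ P.parts, ∀ q ∈ P.parts, p ≠ q → ∀ u ∈ p, ∀ w ∈ q, c s(u, w) ≠ a)
    (hattach : ∀ q ∈ P.parts, ∃ w ∈ q, c s(w, v) = a)
    (hvaried : ∀ p ∈ P.parts, ∀ r, ∃ q ∈ P.parts, q ≠ p ∧ ∃ u ∈ p, ∃ w ∈ q, c s(u, w) ≠ r)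
    {z : V} (hz : z ∈ s.erase v) : c s(z, v) = a := by
  obtain ⟨p, hp, hzp⟩ := P.exists_mem hz
  obtain ⟨q, hq, hqp, u, hu, w, hw, huw⟩ := hvaried p hp (c s(z, v))
  obtain ⟨b, hb⟩ := hP.monochromatic p hp q hq hqp.symm
  obtain ⟨w', hw', hw'v⟩ := hattach q hq
  have hzw' : z ≠ w' := fun h => hqp (P.eq_of_mem_parts hq hp hw' (h ▸ hzp))
  have hw'v_ne : w' ≠ v := (Finset.mem_erase.mp (P.subset hq hw')).1
  have hne : c s(z, w') ≠ c s(z, v) := by rwa [hb z hzp w' hw', ← hb u hu w hw]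
  rcases color_eq_or_color_eq_of_ne hc hzw' (Finset.mem_erase.mp hz).1 hw'v_ne hne with h | h
  · exact absurd (h ▸ hw'v) (hcross p hp q hq hqp.symm z hzp w' hw')
  · rw [← h, hw'v]

lemma not_forall_color_eq_of_mem_parts (hc : ¬ HasRainbowTriangle c) (hP : 2 ≤ P.parts.card)
    {b r : α} (hconn : ∀ x ∈ s, ∀ z ∈ s, (colorGraph c s b).Reachable x z) (hba : b ≠ a)
    (hbr : b ≠ r) (hcross : ∀ p ∈ P.parts, ∀ q ∈ P.parts, p ≠ q → ∀ u ∈ p, ∀ w ∈ q, c s(u, w) ≠ a)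
    (hattach : ∀ q ∈ P.parts, ∃ w ∈ q, c s(w, v) = a) {p : Finset V} (hp : p ∈ P.parts) :
    ¬ ∀ q ∈ P.parts, q ≠ p → ∀ u ∈ p, ∀ w ∈ q, c s(u, w) = r := by
  intro hr
  obtain ⟨u, hu, hvu⟩ := exists_mem_color_eq_of_mem_parts hP hconn hp
    fun q hq hqp u hu w hw h => hbr (h ▸ hr q hq hqp u hu w hw)
  obtain ⟨q, hq, hqp⟩ := Finset.exists_mem_ne hP p
  obtain ⟨w, hw, hvw⟩ := hattach q hq
  have huw : u ≠ w := fun h => hqp (P.eq_of_mem_parts hq hp hw (h ▸ hu))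
  rw [Sym2.eq_swap] at hvu hvw
  rcases color_eq_or_color_eq_of_ne hc (Finset.ne_of_mem_erase (P.subset hp hu)).symm
    (Finset.ne_of_mem_erase (P.subset hq hw)).symm huw (by rw [hvu, hvw]; exact hba) with h | h <;>
    rw [hr q hq hqp u hu w hw] at h
  · exact hbr (hvu ▸ h).symm
  · exact hcross p hp q hq hqp.symm u hu w hw ((hr q hq hqp u hu w hw).trans (h.trans hvw))

lemma false_of_isGallaiPartition_erase (hc : ¬ HasRainbowTriangle c) (hv : v ∈ s)
    (hconn : ∀ u ∈ s, ∀ w ∈ s, u ≠ w → ∀ z ∈ s, (colorGraph c s (c s(u, w))).Reachable u z)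
    (hcolors : ∀ c₁ c₂ : α, ∃ u ∈ s, ∃ w ∈ s, u ≠ w ∧ c s(u, w) ≠ c₁ ∧ c s(u, w) ≠ c₂)
    (hP : IsGallaiPartition c P) : False := by
  have hconn' : ∀ u ∈ s, ∀ w ∈ s, u ≠ w → ∀ x ∈ s, ∀ z ∈ s,
      (colorGraph c s (c s(u, w))).Reachable x z := fun u hu w hw huw x hx z hz =>
    (hconn u hu w hw huw x hx).symm.trans (hconn u hu w hw huw z hz)
  have hP2 := hP.two_le_card_parts
  obtain ⟨c₁, c₂, hP₂⟩ := hP.exists_two_colors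
  obtain ⟨x, hx, y, hy, hxy, hX₁, hX₂⟩ := hcolors c₁ c₂
  set X := c s(x, y)
  have hcross : ∀ p ∈ P.parts, ∀ q ∈ P.parts, p ≠ q → ∀ u ∈ p, ∀ w ∈ q, c s(u, w) ≠ X :=
    fun p hp q hq hpq u hu w hw h => (hP₂ p hp q hq hpq u hu w hw).elim
      (fun h' => hX₁ (h ▸ h')) (fun h' => hX₂ (h ▸ h'))
  have hattach : ∀ q ∈ P.parts, ∃ w ∈ q, c s(w, v) = X := fun q hq =>
    exists_mem_color_eq_of_mem_parts hP2 (hconn' x hx y hy hxy) hq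
      fun q' hq' hq'q => hcross q hq q' hq' hq'q.symm
  by_cases hvaried : ∀ p ∈ P.parts, ∀ r, ∃ q ∈ P.parts, q ≠ p ∧ ∃ u ∈ p, ∃ w ∈ q, c s(u, w) ≠ r
  · -- `v` is joined to all other vertices in color `X`, so no color used across parts reaches it
    obtain ⟨p, hp⟩ : P.parts.Nonempty := Finset.card_pos.mp (by omega)
    obtain ⟨q, hq, hqp⟩ := Finset.exists_mem_ne hP2 p
    obtain ⟨u, hu⟩ := P.nonempty_of_mem_parts hp
    obtain ⟨w, hw⟩ := P.nonempty_of_mem_parts hq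
    have huw : u ≠ w := fun h => hqp (P.eq_of_mem_parts hq hp hw (h ▸ hu))
    obtain ⟨m, hm, hmv⟩ := exists_color_eq_of_reachable (T := s.erase v)
      (hconn u (Finset.mem_of_mem_erase (P.subset hp hu)) w
        (Finset.mem_of_mem_erase (P.subset hq hw)) huw v hv)
      (P.subset hp hu) (Finset.notMem_erase v s)
      fun m _ k hk hkT hkv => absurd (Finset.mem_erase.mpr ⟨hkv, hk⟩) hkT
    rw [color_eq_of_forall_exists_color_ne hc hP hcross hattach hvaried hm] at hmv
    exact hcross p hp q hq hqp.symm u hu w hw hmv.symm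
  · push Not at hvaried
    obtain ⟨p₀, hp₀, r, hr⟩ := hvaried
    obtain ⟨x', hx', y', hy', hxy', hY₁, hY₂⟩ := hcolors X r
    exact not_forall_color_eq_of_mem_parts hc hP2 (hconn' x' hx' y' hy' hxy') hY₁ hY₂ hcross
      hattach hp₀ hr

lemma exists_isGallaiPartition_of_not_reachable (hc : ¬ HasRainbowTriangle c) {u w z : V}
    (hu : u ∈ s) (hw : w ∈ s) (huw : u ≠ w) (hz : z ∈ s)
    (hnz : ¬ (colorGraph c s (c s(u, w))).Reachable u z)
    (ih : ∀ t ⊂ s, 2 ≤ t.card → ∃ P : Finpartition t, IsGallaiPartition c P) :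
    ∃ P : Finpartition s, IsGallaiPartition c P := by
  classical
  set M := s.filter ((colorGraph c s (c s(u, w))).Reachable u)
  have huM : u ∈ M := Finset.mem_filter.mpr ⟨hu, .rfl⟩
  have hwM : w ∈ M :=
    Finset.mem_filter.mpr ⟨hw, (colorGraph_adj.mpr ⟨hu, hw, huw, rfl⟩).reachable⟩
  have hzM : z ∉ M := fun h => hnz (Finset.mem_filter.mp h).2
  have huz : u ≠ z := by rintro rfl; exact hnz .rfl
  obtain ⟨P, hP⟩ := ih (insert u (s \ M))
    ((Finset.ssubset_iff_of_subset (Finset.insert_subset hu Finset.sdiff_subset)).mpr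
      ⟨w, hw, by simp [huw.symm, hwM]⟩)
    (Finset.one_lt_card.mpr ⟨u, Finset.mem_insert_self _ _, z,
      Finset.mem_insert_of_mem (Finset.mem_sdiff.mpr ⟨hz, hzM⟩), huz⟩)
  exact exists_isGallaiPartition_of_contract (Finset.filter_subset _ _) huM
    (fun x hx hxM y hyM => color_eq_of_reachable hc hx
      (fun h => hxM (Finset.mem_filter.mpr ⟨hx, h⟩)) (Finset.mem_filter.mp hyM).2) hP

lemma exists_forall_color_eq_of_card_eq_two (hs : s.card = 2) :
    ∃ a, ∀ u ∈ s, ∀ w ∈ s, u ≠ w → c s(u, w) = a := by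
  obtain ⟨x, y, -, rfl⟩ := Finset.card_eq_two.mp hs
  refine ⟨c s(x, y), fun u hu w hw huw => ?_⟩
  simp only [Finset.mem_insert, Finset.mem_singleton] at hu hw
  rcases hu with rfl | rfl <;> rcases hw with rfl | rfl
  exacts [absurd rfl huw, rfl, by rw [Sym2.eq_swap], absurd rfl huw]

theorem exists_isGallaiPartition (hc : ¬ HasRainbowTriangle c) (s : Finset V) (hs : 2 ≤ s.card) :
    ∃ P : Finpartition s, IsGallaiPartition c P := by
  induction s using Finset.strongInduction with
  | H s ih =>
    by_cases hsplit : ∃ u ∈ s, ∃ w ∈ s, u ≠ w ∧ ∃ z ∈ s,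
        ¬ (colorGraph c s (c s(u, w))).Reachable u z
    · obtain ⟨u, hu, w, hw, huw, z, hz, hnz⟩ := hsplit
      exact exists_isGallaiPartition_of_not_reachable hc hu hw huw hz hnz ih
    push Not at hsplit
    by_cases htwo : ∃ c₁ c₂ : α, ∀ u ∈ s, ∀ w ∈ s, u ≠ w → c s(u, w) = c₁ ∨ c s(u, w) = c₂
    · obtain ⟨c₁, c₂, h⟩ := htwo
      exact ⟨⊥, isGallaiPartition_bot hs h⟩
    push Not at htwo
    have hs3 : 3 ≤ s.card := by
      by_contra! h
      obtain ⟨a, ha⟩ := exists_forall_color_eq_of_card_eq_two (c := c) (by omega : s.card = 2)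
      obtain ⟨u, hu, w, hw, huw, hne, -⟩ := htwo a a
      exact hne (ha u hu w hw huw)
    obtain ⟨v, hv⟩ : s.Nonempty := Finset.card_pos.mp (by omega)
    obtain ⟨P, hP⟩ := ih _ (Finset.erase_ssubset hv) (by rw [Finset.card_erase_of_mem hv]; omega)
    exact (false_of_isGallaiPartition_erase hc hv hsplit htwo hP).elim

end Gallai

/-- In any edge coloring of a finite complete graph on at least two vertices
with no rainbow triangle, there is a partition of the vertex set into at least two
(nonempty) parts such that at most two colors appear on edges between distinct parts and,
between each pair of distinct parts, all edges have a single color. -/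
theorem gallai_partition {V α : Type*} [Fintype V] [DecidableEq V]
    (hV : 2 ≤ Fintype.card V) (c : Sym2 V → α) (hc : ¬ HasRainbowTriangle c) :
    ∃ P : Finpartition (Finset.univ : Finset V), 2 ≤ P.parts.card ∧
      (∃ c₁ c₂ : α, ∀ p ∈ P.parts, ∀ q ∈ P.parts, p ≠ q →
        ∀ u ∈ p, ∀ v ∈ q, c s(u, v) = c₁ ∨ c s(u, v) = c₂) ∧
      (∀ p ∈ P.parts, ∀ q ∈ P.parts, p ≠ q →
        ∃ a : α, ∀ u ∈ p, ∀ v ∈ q, c s(u, v) = a) := by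
  obtain ⟨P, hP⟩ := exists_isGallaiPartition hc Finset.univ (by rwa [Finset.card_univ])
  exact ⟨P, hP.two_le_card_parts, hP.exists_two_colors, hP.monochromatic⟩
end

section
/- Let G be a graph of order n ≥ 3 with minimum degree δ(G) ≥ (n + 1)/2. Then G is vertex pancyclic; that is, every vertex of G is contained in a cycle of length k for every k with 3 ≤ k ≤ n. -/
/-!
Deleting `v` leaves a graph on `n - 1` vertices of minimum degree at least `(n - 1) / 2`, so by
Dirac's theorem it has a Hamiltonian cycle `u`, indexed by `ZMod (n - 1)`. Since `v` has more than
`(n - 1) / 2` neighbours on `u`, for each `1 ≤ l < n - 1` pigeonhole gives an `i` with `u i` and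
`u (i + l)` both adjacent to `v`, and `v, u i, …, u (i + l), v` is a cycle of length `l + 2`.

Dirac's theorem is proved through a longest path: all neighbours of its ends lie on it, so by
counting some `f 0 ~ f (i + 1)` and `f p ~ f i`, and rotating yields a cycle through all vertices
of the path. A vertex off that cycle would have a neighbour on it (the cycle has more than
`δ` vertices), giving a longer path.
-/

open SimpleGraph

open Finset

namespace SimpleGraph

variable {W : Type*} (H : SimpleGraph W)

/-- `f 0, f 1, …, f p` is a path of length `p` in `H`. -/
structure IsPathSeq (f : ℕ → W) (p : ℕ) : Prop where
  injOn : Set.InjOn f (Set.Iic p)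
  adj : ∀ j < p, H.Adj (f j) (f (j + 1))

variable {H} {f : ℕ → W} {p : ℕ}

namespace IsPathSeq

lemma card_le [Fintype W] (hf : H.IsPathSeq f p) : p + 1 ≤ Fintype.card W := by
  simpa using card_le_card_of_injOn f (s := range (p + 1)) (t := univ) (by simp)
    fun j hj k hk => hf.injOn (by simpa [Nat.lt_succ_iff] using hj)
      (by simpa [Nat.lt_succ_iff] using hk)

lemma reverse (hf : H.IsPathSeq f p) : H.IsPathSeq (fun j => f (p - j)) p where
  injOn j hj k hk e := by
    simp only [Set.mem_Iic] at hj hk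
    have := hf.injOn (by simp : p - j ∈ Set.Iic p) (by simp : p - k ∈ Set.Iic p) e
    omega
  adj j hj := by
    have := (hf.adj (p - (j + 1)) (by omega)).symm
    rwa [show p - (j + 1) + 1 = p - j by omega] at this

lemma cons (hf : H.IsPathSeq f p) {y : W} (hy : ∀ j ≤ p, f j ≠ y) (hadj : H.Adj y (f 0)) :
    H.IsPathSeq (fun | 0 => y | j + 1 => f j) (p + 1) where
  injOn j hj k hk e := by
    simp only [Set.mem_Iic] at hj hk
    match j, k with
    | 0, 0 => rfl
    | 0, k + 1 => exact absurd e.symm (hy k (by omega))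
    | j + 1, 0 => exact absurd e (hy j (by omega))
    | j + 1, k + 1 => exact congrArg (· + 1) (hf.injOn (by simp; omega) (by simp; omega) e)
  adj j hj := by
    match j with
    | 0 => exact hadj
    | j + 1 => exact hf.adj j (by omega)

lemma exists_eq_of_adj_zero (hf : H.IsPathSeq f p) (hmax : ∀ g q, H.IsPathSeq g q → q ≤ p)
    {y : W} (hy : H.Adj (f 0) y) : ∃ j ≤ p, f j = y := by
  by_contra! h
  have := hmax _ _ (hf.cons h hy.symm)
  omega

lemma exists_eq_of_adj_last (hf : H.IsPathSeq f p) (hmax : ∀ g q, H.IsPathSeq g q → q ≤ p)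
    {y : W} (hy : H.Adj (f p) y) : ∃ j ≤ p, f j = y := by
  obtain ⟨j, hj, rfl⟩ := hf.reverse.exists_eq_of_adj_zero hmax (by simpa using hy)
  exact ⟨p - j, by omega, rfl⟩

/-- Pósa rotation: `f 0, …, f i, f p, f (p - 1), …, f (i + 1)`. -/
lemma rotate (hf : H.IsPathSeq f p) {i : ℕ} (hi : i < p) (hadj : H.Adj (f p) (f i)) :
    H.IsPathSeq (fun j => if j ≤ i then f j else f (p + 1 + i - j)) p where
  injOn j hj k hk e := by
    simp only [Set.mem_Iic] at hj hk
    dsimp only at e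
    split_ifs at e with hji hki hki
    · exact hf.injOn (by simp; omega) (by simp; omega) e
    all_goals have := hf.injOn (by simp; omega) (by simp; omega) e; omega
  adj j hj := by
    by_cases hji : j + 1 ≤ i
    · simpa [hji, show j ≤ i by omega] using hf.adj j (by omega)
    by_cases hj : j = i
    · subst hj
      simpa [show p + 1 + j - (j + 1) = p by omega] using hadj.symm
    · have := (hf.adj (p + i - j) (by omega)).symm
      simpa [hji, show ¬ j ≤ i by omega, show p + 1 + i - j = p + i - j + 1 by omega,
        show p + 1 + i - (j + 1) = p + i - j by omega] using this

lemma injective_zmod (hf : H.IsPathSeq f p) :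
    Function.Injective (fun j : ZMod (p + 1) => f j.val) :=
  fun j k e => ZMod.val_injective _ (hf.injOn (by simpa [Nat.lt_succ_iff] using j.val_lt)
    (by simpa [Nat.lt_succ_iff] using k.val_lt) e)

lemma adj_zmod_add_one (hf : H.IsPathSeq f p) (hclose : H.Adj (f p) (f 0)) (j : ZMod (p + 1)) :
    H.Adj (f j.val) (f (j + 1).val) := by
  obtain ⟨a, ha, rfl⟩ : ∃ a < p + 1, (a : ZMod (p + 1)) = j :=
    ⟨j.val, j.val_lt, j.natCast_zmod_val⟩
  rw [← Nat.cast_succ, ZMod.val_natCast, ZMod.val_natCast, Nat.mod_eq_of_lt ha]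
  rcases Nat.lt_succ_iff_lt_or_eq.mp ha with ha | rfl
  · rw [Nat.mod_eq_of_lt (by omega)]
    exact hf.adj a ha
  · simpa using hclose

end IsPathSeq

lemma exists_longest_isPathSeq [Fintype W] [Nonempty W] :
    ∃ f p, H.IsPathSeq f p ∧ ∀ g q, H.IsPathSeq g q → q ≤ p := by
  classical
  have h0 : ∃ f, H.IsPathSeq f 0 := ⟨fun _ => Classical.arbitrary W,
    fun j hj k hk _ => by simp_all, fun j hj => absurd hj j.not_lt_zero⟩
  obtain ⟨f, hf⟩ := Nat.findGreatest_spec (P := fun q => ∃ f, H.IsPathSeq f q)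
    (Nat.zero_le (Fintype.card W)) h0
  exact ⟨f, _, hf, fun g q hg => Nat.le_findGreatest (by linarith [hg.card_le]) ⟨g, hg⟩⟩

lemma degree_le_card_filter_adj [Fintype W] [DecidableRel H.Adj] {x : W} (g : ℕ → W) (p : ℕ)
    (hx : ∀ y, H.Adj x y → ∃ j < p, g j = y) :
    H.degree x ≤ #{j ∈ range p | H.Adj x (g j)} := by
  classical
  rw [← card_neighborFinset_eq_degree]
  refine (card_le_card (t := image g {j ∈ range p | H.Adj x (g j)}) fun y hy => ?_).trans
    card_image_le
  obtain ⟨j, hj, rfl⟩ := hx y ((mem_neighborFinset _ _ _).mp hy)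
  exact mem_image.mpr ⟨j, by simpa [hj] using (mem_neighborFinset _ _ _).mp hy, rfl⟩

namespace IsPathSeq

variable [Fintype W] [DecidableRel H.Adj]

lemma minDegree_le_card_filter_zero (hf : H.IsPathSeq f p)
    (hmax : ∀ g q, H.IsPathSeq g q → q ≤ p) :
    H.minDegree ≤ #{j ∈ range p | H.Adj (f 0) (f (j + 1))} := by
  refine (H.minDegree_le_degree _).trans (degree_le_card_filter_adj _ _ fun y hy => ?_)
  obtain ⟨j, hj, rfl⟩ := hf.exists_eq_of_adj_zero hmax hy
  have : j ≠ 0 := by rintro rfl; exact H.irrefl hy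
  exact ⟨j - 1, by omega, by rw [Nat.sub_add_cancel (by omega)]⟩

lemma minDegree_le_card_filter_last (hf : H.IsPathSeq f p)
    (hmax : ∀ g q, H.IsPathSeq g q → q ≤ p) :
    H.minDegree ≤ #{j ∈ range p | H.Adj (f p) (f j)} := by
  refine (H.minDegree_le_degree _).trans (degree_le_card_filter_adj _ _ fun y hy => ?_)
  obtain ⟨j, hj, rfl⟩ := hf.exists_eq_of_adj_last hmax hy
  have : j ≠ p := by rintro rfl; exact H.irrefl hy
  exact ⟨j, by omega, rfl⟩

lemma minDegree_le (hf : H.IsPathSeq f p) (hmax : ∀ g q, H.IsPathSeq g q → q ≤ p) :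
    H.minDegree ≤ p :=
  (hf.minDegree_le_card_filter_zero hmax).trans ((card_filter_le _ _).trans (card_range p).le)

lemma exists_adj_zero_succ_and_adj_last (hf : H.IsPathSeq f p)
    (hmax : ∀ g q, H.IsPathSeq g q → q ≤ p) (hp : p < 2 * H.minDegree) :
    ∃ i < p, H.Adj (f 0) (f (i + 1)) ∧ H.Adj (f p) (f i) := by
  obtain ⟨i, hi⟩ := inter_nonempty_of_card_lt_card_add_card (s := range p)
    (filter_subset (fun j => H.Adj (f 0) (f (j + 1))) _)
    (filter_subset (fun j => H.Adj (f p) (f j)) _) (by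
      have := hf.minDegree_le_card_filter_zero hmax
      have := hf.minDegree_le_card_filter_last hmax
      rw [card_range]; omega)
  simp only [mem_inter, mem_filter, mem_range] at hi
  exact ⟨i, hi.1.1, hi.1.2, hi.2.2⟩

end IsPathSeq

lemma isPathSeq_of_cyclic {m : ℕ} {u : ZMod m → W} (hu : Function.Injective u)
    (hadj : ∀ i, H.Adj (u i) (u (i + 1))) (z : ZMod m) {l : ℕ} (hl : l < m) :
    H.IsPathSeq (fun j : ℕ => u (z + j)) l where
  injOn j hj k hk e := by
    simp only [Set.mem_Iic] at hj hk
    have := (ZMod.natCast_eq_natCast_iff' j k m).mp (add_left_cancel (hu e))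
    rwa [Nat.mod_eq_of_lt (by omega), Nat.mod_eq_of_lt (by omega)] at this
  adj j _ := by simpa [add_assoc] using hadj (z + j)

lemma exists_adj_of_card_le_minDegree_add [Fintype W] [DecidableRel H.Adj] (s : Finset W)
    (hs : #s < Fintype.card W) (hδ : Fintype.card W ≤ H.minDegree + #s) :
    ∃ y ∉ s, ∃ z ∈ s, H.Adj y z := by
  classical
  obtain ⟨y, -, hy⟩ := exists_mem_notMem_of_card_lt_card (s := s) (t := univ)
    (by simpa using hs)
  refine ⟨y, hy, ?_⟩
  by_contra! h
  have hsub : H.neighborFinset y ⊆ (sᶜ).erase y := fun z hz => by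
    rw [mem_neighborFinset] at hz
    exact mem_erase.mpr ⟨hz.ne', mem_compl.mpr fun hzs => h z hzs hz⟩
  have := (H.minDegree_le_degree y).trans
    ((card_neighborFinset_eq_degree H y).symm.le.trans (card_le_card hsub))
  rw [card_erase_of_mem (mem_compl.mpr hy), card_compl] at this
  omega

theorem exists_hamiltonian_cycle_of_card_le_two_mul_minDegree [Fintype W] [DecidableRel H.Adj]
    [Nonempty W] (hδ : Fintype.card W ≤ 2 * H.minDegree) :
    ∃ u : ZMod (Fintype.card W) → W,
      Function.Bijective u ∧ ∀ i, H.Adj (u i) (u (i + 1)) := by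
  classical
  obtain ⟨f, p, hf, hmax⟩ := H.exists_longest_isPathSeq
  obtain ⟨i, hi, h0, hp⟩ := hf.exists_adj_zero_succ_and_adj_last hmax (by linarith [hf.card_le])
  have hg := hf.rotate hi hp
  set g := fun j => if j ≤ i then f j else f (p + 1 + i - j)
  have hclose : H.Adj (g p) (g 0) := by
    simpa [g, show ¬ p ≤ i by omega, show p + 1 + i - p = i + 1 by omega] using h0.symm
  let u := fun j : ZMod (p + 1) => g j.val
  have hcard : p + 1 = Fintype.card W := by
    refine le_antisymm hf.card_le (not_lt.mp fun hlt => ?_)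
    obtain ⟨y, hy, _, hz, hyz⟩ :=
      H.exists_adj_of_card_le_minDegree_add (univ.image u)
      (by rwa [card_image_of_injective _ hg.injective_zmod, card_univ, ZMod.card])
      (by rw [card_image_of_injective _ hg.injective_zmod, card_univ, ZMod.card]
          linarith [hf.minDegree_le hmax])
    obtain ⟨z, -, rfl⟩ := mem_image.mp hz
    have hext := (isPathSeq_of_cyclic hg.injective_zmod (hg.adj_zmod_add_one hclose) z
      (Nat.lt_succ_self p)).cons (fun j _ h => hy (mem_image.mpr ⟨_, mem_univ _, h⟩))
      (by simpa using hyz)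
    linarith [hmax _ _ hext]
  rw [← hcard]
  refine ⟨u, ?_, hg.adj_zmod_add_one hclose⟩
  exact (Fintype.bijective_iff_injective_and_card _).mpr
    ⟨hg.injective_zmod, by simpa using hcard⟩

lemma exists_walk_support_eq (f : ℕ → W) :
    ∀ p, (∀ j < p, H.Adj (f j) (f (j + 1))) →
      ∃ P : H.Walk (f 0) (f p), P.support = (List.range (p + 1)).map f
  | 0, _ => ⟨Walk.nil, by simp⟩
  | p + 1, hadj => by
    obtain ⟨P, hP⟩ := exists_walk_support_eq f p fun j hj => hadj j (by omega)
    exact ⟨P.concat (hadj p (by omega)), by simp [hP, List.range_succ]⟩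

lemma IsPathSeq.exists_isPath (hf : H.IsPathSeq f p) :
    ∃ P : H.Walk (f 0) (f p), P.IsPath ∧ P.length = p ∧
      P.support = (List.range (p + 1)).map f := by
  obtain ⟨P, hP⟩ := H.exists_walk_support_eq f p hf.adj
  refine ⟨P, ?_, by simpa [hP] using P.length_support.symm, hP⟩
  rw [Walk.isPath_def, hP]
  exact List.nodup_range.map_on fun j hj k hk => hf.injOn
    (by simpa [Nat.lt_succ_iff] using hj) (by simpa [Nat.lt_succ_iff] using hk)

lemma Walk.IsPath.isCycle_cons_concat {a b v : W} {P : H.Walk a b} (hP : P.IsPath) (hab : a ≠ b)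
    (hv : v ∉ P.support) (ha : H.Adj v a) (hb : H.Adj b v) :
    (Walk.cons ha (P.concat hb)).IsCycle := by
  refine (Walk.cons_isCycle_iff _ ha).mpr ⟨hP.concat hv hb, fun he => ?_⟩
  rw [Walk.edges_concat, List.concat_eq_append, List.mem_append, List.mem_singleton] at he
  rcases he with he | he
  · exact hv (P.fst_mem_support_of_mem_edges he)
  · rcases Sym2.eq_iff.mp he with ⟨rfl, -⟩ | ⟨-, rfl⟩
    · exact hv P.end_mem_support
    · exact hab rfl

theorem exists_isCycle_length_of_cyclic [Fintype W] [DecidableRel H.Adj] {m : ℕ} [NeZero m]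
    {u : ZMod m → W} (hu : Function.Injective u) (hadj : ∀ i, H.Adj (u i) (u (i + 1))) {v : W}
    (hv : ∀ i, u i ≠ v) (hcover : ∀ y, H.Adj v y → ∃ i, u i = y)
    (hdeg : m < 2 * H.degree v)
    {l : ℕ} (hl : 1 ≤ l) (hlm : l < m) :
    ∃ w : H.Walk v v, w.IsCycle ∧ w.length = l + 2 := by
  classical
  have hS : H.degree v ≤ #{i | H.Adj v (u i)} := by
    rw [← card_neighborFinset_eq_degree]
    refine card_le_card_of_surjOn u fun y hy => ?_
    obtain ⟨i, rfl⟩ := hcover y ((mem_neighborFinset _ _ _).mp hy)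
    exact ⟨i, by simpa using (mem_neighborFinset _ _ _).mp hy, rfl⟩
  obtain ⟨i, hi⟩ := inter_nonempty_of_card_lt_card_add_card (subset_univ {i | H.Adj v (u i)})
    (subset_univ (image (· - (l : ZMod m)) {i | H.Adj v (u i)}))
    (by rw [card_univ, ZMod.card, card_image_of_injective _ (sub_left_injective)]; omega)
  simp only [mem_inter, mem_filter, mem_univ, true_and, mem_image] at hi
  obtain ⟨hvi, k, hvk, rfl⟩ := hi
  have hseg := isPathSeq_of_cyclic hu hadj (k - l) hlm
  obtain ⟨P, hP, hlen, hsupp⟩ := hseg.exists_isPath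
  have hne : u (k - l + (0 : ℕ)) ≠ u (k - l + l) := fun h => by
    have := hseg.injOn (by simp) (by simp) h
    omega
  refine ⟨Walk.cons (by simpa using hvi) (P.concat (by simpa using hvk.symm)),
    hP.isCycle_cons_concat hne ?_ _ _, by simp [hlen]⟩
  simp only [hsupp, List.mem_map, not_exists, not_and]
  exact fun j _ => hv _

lemma minDegree_le_minDegree_induce_compl_singleton_add_one [Fintype W] [DecidableEq W]
    [DecidableRel H.Adj] (v : W) [Nonempty ↥({v}ᶜ : Set W)] :
    H.minDegree ≤ (H.induce {v}ᶜ).minDegree + 1 := by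
  suffices H.minDegree - 1 ≤ (H.induce {v}ᶜ).minDegree by omega
  refine le_minDegree_of_forall_le_degree _ _ fun w => ?_
  rw [← card_neighborFinset_eq_degree, ← card_map, map_neighborFinset_induce]
  calc H.minDegree - 1 ≤ #(H.neighborFinset w) - 1 := by
        rw [card_neighborFinset_eq_degree]
        exact Nat.sub_le_sub_right (H.minDegree_le_degree _) 1
    _ ≤ #((H.neighborFinset w).erase v) := pred_card_le_card_erase
    _ = #(H.neighborFinset w ∩ ({v}ᶜ : Set W).toFinset) := by
        rw [Set.toFinset_compl, Set.toFinset_singleton, ← sdiff_eq_inter_compl,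
          sdiff_singleton_eq_erase]

end SimpleGraph

theorem vertex_pancyclic_of_min_degree_general {V : Type*} [Fintype V] (G : SimpleGraph V)
    [DecidableRel G.Adj]
    (hδ : ((Fintype.card V : ℚ) + 1) / 2 ≤ (G.minDegree : ℚ)) :
    ∀ v : V, ∀ k : ℕ, 3 ≤ k → k ≤ Fintype.card V →
      ∃ w : G.Walk v v, w.IsCycle ∧ w.length = k := by
  classical
  intro v k hk3 hkn
  have hδ' : Fintype.card V + 1 ≤ 2 * G.minDegree := by
    have : ((Fintype.card V + 1 : ℕ) : ℚ) ≤ ((2 * G.minDegree : ℕ) : ℚ) := by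
      push_cast; linarith
    exact_mod_cast this
  have hcard : Fintype.card ↥({v}ᶜ : Set V) = Fintype.card V - 1 := by
    simp [filter_ne']
  have : Nonempty ↥({v}ᶜ : Set V) := Fintype.card_pos_iff.mp (by omega)
  obtain ⟨u, hu, hadj⟩ :=
    (G.induce {v}ᶜ).exists_hamiltonian_cycle_of_card_le_two_mul_minDegree
      (by have := G.minDegree_le_minDegree_induce_compl_singleton_add_one v; omega)
  obtain ⟨w, hw, hlen⟩ := G.exists_isCycle_length_of_cyclic (u := Subtype.val ∘ u)
    (Subtype.val_injective.comp hu.injective) (fun i => induce_adj.mp (hadj i)) (fun i => (u i).2)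
    (fun y hy => (hu.surjective ⟨y, hy.ne'⟩).imp fun i hi => by simp [hi])
    (by have := G.minDegree_le_degree v; omega) (l := k - 2) (by omega) (by omega)
  exact ⟨w, hw, by omega⟩

/-- Let `G` be a graph of order `n ≥ 3` with minimum degree at least
`(n + 1)/2`. Then `G` is vertex pancyclic: every vertex lies on a cycle of length `k`
for every `3 ≤ k ≤ n`. -/
theorem vertex_pancyclic_of_min_degree {V : Type*} [Fintype V] (G : SimpleGraph V)
    [DecidableRel G.Adj] (hn : 3 ≤ Fintype.card V)
    (hδ : ((Fintype.card V : ℚ) + 1) / 2 ≤ (G.minDegree : ℚ)) :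
    ∀ v : V, ∀ k : ℕ, 3 ≤ k → k ≤ Fintype.card V →
      ∃ w : G.Walk v v, w.IsCycle ∧ w.length = k :=
  vertex_pancyclic_of_min_degree_general G hδ
end
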